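/- Treated-arm variance identity in the Hajek linearization (key computation of Lemma 3): Given a dependency structure B, writing μ̄¹ = (1/N) Σ_{i=1}^N E[μ_i^{(1)}(Z)], the following exact identity holds: N · Var[(1/(Np)) Σ_{i=1}^N Z_i (μ_i(Z) − μ̄¹)] = (1/(Np)) Σ_{i=1}^N E[(μ_i^{(1)}(Z) − μ̄¹)²] − (1/N) Σ_{i=1}^N (E[μ_i^{(1)}(Z)] − μ̄¹)² + (1/N) Σ_{i=1}^N Σ_{j∈B(i), j≠i} ( E[(μ_i(Z[i:=1][j:=1]) − μ̄¹)(μ_j(Z[i:=1][j:=1]) − μ̄¹)] − (E[μ_i^{(1)}(Z)] − μ̄¹)(E[μ_j^{(1)}(Z)] − μ̄¹) ). -/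

import Mathlib

/-- Expectation with respect to the Bernoulli(p) product measure on `{0,1}^N`. -/
noncomputable def bexp {N : ℕ} (p : ℝ) (f : (Fin N → Bool) → ℝ) : ℝ :=
  ∑ z : Fin N → Bool, (∏ i, if z i then p else 1 - p) * f z

/-- Variance under the Bernoulli(p) product measure. -/
noncomputable def bvar {N : ℕ} (p : ℝ) (f : (Fin N → Bool) → ℝ) : ℝ :=
  bexp p (fun z => (f z) ^ 2) - (bexp p f) ^ 2

/-- Covariance under the Bernoulli(p) product measure. -/
noncomputable def bcov {N : ℕ} (p : ℝ) (f g : (Fin N → Bool) → ℝ) : ℝ :=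
  bexp p (fun z => f z * g z) - bexp p f * bexp p g

/-- A dependency structure. -/
def DepStruct {N : ℕ} (p : ℝ) (μ : Fin N → (Fin N → Bool) → ℝ)
    (B : Fin N → Finset (Fin N)) : Prop :=
  (∀ i, i ∈ B i) ∧
  ∀ i j : Fin N, j ∉ B i →
    (∀ z : Fin N → Bool, μ i (Function.update z j false) = μ i (Function.update z j true)) ∧
    (∀ z : Fin N → Bool, μ j (Function.update z i false) = μ j (Function.update z i true)) ∧
    (∀ a b : Bool, bcov p (fun z => μ i (Function.update z i a))
        (fun z => μ j (Function.update z j b)) = 0)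

/-!
Write the estimator as `(1 / (N p)) ∑ i, a i` with `a i z = 1[z i] (μ i z - m)`, so that its
variance is `(1 / (N p))² ∑ i j, Cov(a i, a j)`. Conditioning on coordinate `i` of the Bernoulli
product gives `E[1[z i] f] = p E[f (z[i:=1])]`, and for `i ≠ j` the two indicators contribute
`p²` with both coordinates set to `1`; this yields the diagonal terms and the terms with
`j ∈ B i`. For `j ∉ B i`, `μ i` ignores `z j` and `μ j` ignores `z i`, so
`Cov(a i, a j) = p² Cov(μ_i^(1), μ_j^(1)) = 0`.
-/

open Finset Function

section Bernoulli

variable {N : ℕ} {p : ℝ}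

lemma sum_prod_bernoulli_weight :
    ∑ z : Fin N → Bool, ∏ i, (if z i then p else 1 - p) = 1 := by
  rw [← Fintype.prod_sum fun _ (b : Bool) => if b then p else 1 - p]
  simp

lemma bexp_const (c : ℝ) : bexp (N := N) p (fun _ => c) = c := by
  rw [bexp, ← sum_mul, sum_prod_bernoulli_weight, one_mul]

lemma bexp_add (f g : (Fin N → Bool) → ℝ) :
    bexp p (fun z => f z + g z) = bexp p f + bexp p g := by
  simp only [bexp, mul_add, sum_add_distrib]

lemma bexp_const_mul (c : ℝ) (f : (Fin N → Bool) → ℝ) :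
    bexp p (fun z => c * f z) = c * bexp p f := by
  simp only [bexp, mul_sum, mul_left_comm c]

lemma bexp_sub_const (f : (Fin N → Bool) → ℝ) (c : ℝ) :
    bexp p (fun z => f z - c) = bexp p f - c := by
  simp only [sub_eq_add_neg, bexp_add f (fun _ => -c), bexp_const]

lemma bexp_sum {ι : Type*} (s : Finset ι) (f : ι → (Fin N → Bool) → ℝ) :
    bexp p (fun z => ∑ i ∈ s, f i z) = ∑ i ∈ s, bexp p (f i) := by
  simp only [bexp, mul_sum]
  exact sum_comm

lemma bexp_eq_sum_insertNth {n : ℕ} (i : Fin (n + 1)) (f : (Fin (n + 1) → Bool) → ℝ) :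
    bexp p f = ∑ b : Bool, ∑ y : Fin n → Bool,
      ((if b then p else 1 - p) * ∏ k, if y k then p else 1 - p) * f (i.insertNth b y) := by
  rw [bexp, ← (Fin.insertNthEquiv (fun _ => Bool) i).sum_comp, Fintype.sum_prod_type]
  simp only [Fin.prod_univ_succAbove _ i, Fin.insertNthEquiv_apply, Fin.insertNth_apply_same,
    Fin.insertNth_apply_succAbove]
  rfl

lemma bexp_eq_add_update (i : Fin N) (f : (Fin N → Bool) → ℝ) :
    bexp p f = p * bexp p (fun z => f (update z i true))
      + (1 - p) * bexp p (fun z => f (update z i false)) := by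
  cases N with
  | zero => exact i.elim0
  | succ n =>
    simp only [bexp_eq_sum_insertNth i, Fin.update_insertNth, Fintype.sum_bool, if_true,
      Bool.false_eq_true, if_false, mul_sum, ← sum_add_distrib]
    refine sum_congr rfl fun y _ => ?_
    ring

lemma bexp_indicator_mul (i : Fin N) (f : (Fin N → Bool) → ℝ) :
    bexp p (fun z => (if z i then 1 else 0) * f z)
      = p * bexp p (fun z => f (update z i true)) := by
  rw [bexp_eq_add_update i]
  simp [bexp_const]

lemma bexp_indicator_mul_indicator_mul {i j : Fin N} (hij : i ≠ j) (f : (Fin N → Bool) → ℝ) :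
    bexp p (fun z => (if z i then 1 else 0) * ((if z j then 1 else 0) * f z))
      = p ^ 2 * bexp p (fun z => f (update (update z i true) j true)) := by
  rw [bexp_indicator_mul, sq, mul_assoc]
  simp only [update_of_ne hij.symm, bexp_indicator_mul, update_comm hij.symm]

end Bernoulli

section Covariance

variable {N : ℕ} {p : ℝ}

lemma bexp_sub_mul_sub (f g : (Fin N → Bool) → ℝ) (c d : ℝ) :
    bexp p (fun z => (f z - c) * (g z - d)) = bcov p f g + (bexp p f - c) * (bexp p g - d) := by
  have expand : (fun z => (f z - c) * (g z - d))
      = fun z => f z * g z + (-d * f z + (-c * g z + c * d)) := by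
    funext z; ring
  rw [expand, bexp_add, bexp_add, bexp_add, bexp_const_mul, bexp_const_mul, bexp_const, bcov]
  ring

lemma bvar_const_mul (c : ℝ) (f : (Fin N → Bool) → ℝ) :
    bvar p (fun z => c * f z) = c ^ 2 * bvar p f := by
  simp only [bvar, mul_pow, bexp_const_mul]
  ring

lemma bvar_sum {ι : Type*} (s : Finset ι) (f : ι → (Fin N → Bool) → ℝ) :
    bvar p (fun z => ∑ i ∈ s, f i z) = ∑ i ∈ s, ∑ j ∈ s, bcov p (f i) (f j) := by
  simp only [bvar, bcov, sq, sum_mul_sum, bexp_sum, ← sum_sub_distrib]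

lemma bcov_indicator_mul_self (i : Fin N) (f : (Fin N → Bool) → ℝ) :
    bcov p (fun z => (if z i then 1 else 0) * f z) (fun z => (if z i then 1 else 0) * f z)
      = p * bexp p (fun z => f (update z i true) ^ 2)
        - p ^ 2 * bexp p (fun z => f (update z i true)) ^ 2 := by
  have square : (fun z => (if z i then 1 else 0) * f z * ((if z i then 1 else 0) * f z))
      = fun z => (if z i then 1 else 0) * f z ^ 2 := by
    funext z; split_ifs <;> ring
  rw [bcov, square, bexp_indicator_mul, bexp_indicator_mul]
  ring

lemma bcov_indicator_mul_of_ne {i j : Fin N} (hij : i ≠ j) (f g : (Fin N → Bool) → ℝ) :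
    bcov p (fun z => (if z i then 1 else 0) * f z) (fun z => (if z j then 1 else 0) * g z)
      = p ^ 2 * (bexp p (fun z => f (update (update z i true) j true)
            * g (update (update z i true) j true))
          - bexp p (fun z => f (update z i true)) * bexp p (fun z => g (update z j true))) := by
  have regroup : (fun z => (if z i then 1 else 0) * f z * ((if z j then 1 else 0) * g z))
      = fun z => (if z i then 1 else 0) * ((if z j then 1 else 0) * (f z * g z)) := by
    funext z; ring
  rw [bcov, regroup, bexp_indicator_mul_indicator_mul hij, bexp_indicator_mul,
    bexp_indicator_mul]
  ring

end Covariance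

lemma apply_update_eq_apply {ι α : Type*} [DecidableEq ι] {φ : (ι → Bool) → α} {j : ι}
    (h : ∀ z, φ (update z j false) = φ (update z j true)) (z : ι → Bool) (b : Bool) :
    φ (update z j b) = φ z := by
  have to_true : ∀ b, φ (update z j b) = φ (update z j true) := by
    intro b; cases b
    exacts [h z, rfl]
  rw [to_true b, ← to_true (z j), update_eq_self]

lemma mul_one_div_sq_mul_sum_eq {ι : Type*} {s : Finset ι} {n p : ℝ} (hp : p ≠ 0)
    (q d e : ι → ℝ) :
    n * ((1 / (n * p)) ^ 2 * ∑ i ∈ s, (p * q i - p ^ 2 * d i + p ^ 2 * e i))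
      = 1 / (n * p) * ∑ i ∈ s, q i - 1 / n * ∑ i ∈ s, d i + 1 / n * ∑ i ∈ s, e i := by
  simp only [mul_sum, ← sum_sub_distrib, ← sum_add_distrib]
  refine sum_congr rfl fun i _ => ?_
  rcases eq_or_ne n 0 with rfl | hn
  · simp
  · field_simp

section Hajek

variable {N : ℕ} {p : ℝ} {μ : Fin N → (Fin N → Bool) → ℝ} {B : Fin N → Finset (Fin N)}

lemma bcov_treated_eq_zero (hB : DepStruct p μ B) (m : ℝ) {i j : Fin N} (hij : i ≠ j)
    (hj : j ∉ B i) :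
    bcov p (fun z => (if z i then 1 else 0) * (μ i z - m))
      (fun z => (if z j then 1 else 0) * (μ j z - m)) = 0 := by
  obtain ⟨hμi, hμj, hcov⟩ := hB.2 i j hj
  have decouple : (fun z => (μ i (update (update z i true) j true) - m)
        * (μ j (update (update z i true) j true) - m))
      = fun z => (μ i (update z i true) - m) * (μ j (update z j true) - m) := by
    funext z
    rw [apply_update_eq_apply hμi, update_comm hij, apply_update_eq_apply hμj]
  rw [bcov_indicator_mul_of_ne hij, decouple, bexp_sub_mul_sub, hcov true true, bexp_sub_const,
    bexp_sub_const]
  ring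

lemma sum_bcov_treated (hB : DepStruct p μ B) (m : ℝ) (i : Fin N) :
    ∑ j, bcov p (fun z => (if z i then 1 else 0) * (μ i z - m))
        (fun z => (if z j then 1 else 0) * (μ j z - m))
      = p * bexp p (fun z => (μ i (update z i true) - m) ^ 2)
        - p ^ 2 * (bexp p (fun z => μ i (update z i true)) - m) ^ 2
        + p ^ 2 * ∑ j ∈ (B i).erase i,
            (bexp p (fun z => (μ i (update (update z i true) j true) - m)
                * (μ j (update (update z i true) j true) - m))
              - (bexp p (fun z => μ i (update z i true)) - m)
                * (bexp p (fun z => μ j (update z j true)) - m)) := by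
  rw [← add_sum_erase _ _ (mem_univ i), ← sum_subset (erase_subset_erase i (subset_univ (B i)))]
  · rw [bcov_indicator_mul_self, bexp_sub_const, mul_sum]
    congr 1
    refine sum_congr rfl fun j hj => ?_
    rw [bcov_indicator_mul_of_ne (ne_of_mem_erase hj).symm, bexp_sub_const, bexp_sub_const]
  · intro j hj hjB
    have hji : j ≠ i := ne_of_mem_erase hj
    exact bcov_treated_eq_zero hB m hji.symm fun h => hjB (mem_erase.mpr ⟨hji, h⟩)

end Hajek

theorem hajek_treated_arm_variance_general
    (N : ℕ) (p : ℝ) (hp0 : 0 < p)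
    (μ : Fin N → (Fin N → Bool) → ℝ) (B : Fin N → Finset (Fin N))
    (hB : DepStruct p μ B)
    (mu1 : ℝ) :
    (N : ℝ) * bvar p (fun z =>
        (1 / (N * p)) * ∑ i, (if z i then (1 : ℝ) else 0) * (μ i z - mu1))
      = (1 / (N * p)) * ∑ i, bexp p (fun z => (μ i (Function.update z i true) - mu1) ^ 2)
        - (1 / N) * ∑ i, (bexp p (fun z => μ i (Function.update z i true)) - mu1) ^ 2
        + (1 / N) * ∑ i, ∑ j ∈ (B i).erase i,
            (bexp p (fun z =>
                (μ i (Function.update (Function.update z i true) j true) - mu1)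
                  * (μ j (Function.update (Function.update z i true) j true) - mu1))
              - (bexp p (fun z => μ i (Function.update z i true)) - mu1)
                  * (bexp p (fun z => μ j (Function.update z j true)) - mu1)) := by
  rw [bvar_const_mul, bvar_sum]
  simp only [sum_bcov_treated hB mu1]
  exact mul_one_div_sq_mul_sum_eq hp0.ne' _ _ _

/-- Treated-arm variance identity in the Hajek linearization (key computation of Lemma 3). -/
theorem hajek_treated_arm_variance
    (N : ℕ) (hN : 1 ≤ N) (p : ℝ) (hp0 : 0 < p) (hp1 : p < 1)
    (μ : Fin N → (Fin N → Bool) → ℝ) (B : Fin N → Finset (Fin N))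
    (hB : DepStruct p μ B)
    (mu1 : ℝ)
    (hmu1 : mu1 = (1 / N) * ∑ i, bexp p (fun z => μ i (Function.update z i true))) :
    (N : ℝ) * bvar p (fun z =>
        (1 / (N * p)) * ∑ i, (if z i then (1 : ℝ) else 0) * (μ i z - mu1))
      = (1 / (N * p)) * ∑ i, bexp p (fun z => (μ i (Function.update z i true) - mu1) ^ 2)
        - (1 / N) * ∑ i, (bexp p (fun z => μ i (Function.update z i true)) - mu1) ^ 2
        + (1 / N) * ∑ i, ∑ j ∈ (B i).erase i,
            (bexp p (fun z =>
                (μ i (Function.update (Function.update z i true) j true) - mu1)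
                  * (μ j (Function.update (Function.update z i true) j true) - mu1))
              - (bexp p (fun z => μ i (Function.update z i true)) - mu1)
                  * (bexp p (fun z => μ j (Function.update z j true)) - mu1)) :=
  hajek_treated_arm_variance_general N p hp0 μ B hB mu1
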